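/- Let D ≥ 0, λ > 0, 0 < β₁ ≤ β₂ < 1, and let (η_j)_{j≥1} be step sizes with η_j ∈ (0, 1/λ). Define α_{i,τ} = ∏_{j=i}^{τ} (1 − η_j λ) with the convention α_{τ+1,τ} = 1, and κ^λ_{i,T} = Σ_{τ=i+1}^{T} ((1 − β₁) η_τ α_{τ+1,T} / (1 − β₁^τ)) (β₁^{τ−i−1} + 2 β₂^{τ−i−1}). Let (A_j)_{j=0}^{T} be a non-negative sequence with A_j ≥ (1 − η_j λ) A_{j−1} for all j ≥ 1, and let (u_j)_{j=0}^{T} be a non-negative sequence satisfying u_j ≤ A_j + D Σ_{i=0}^{j−1} κ^λ_{i,j} u_i for all 0 ≤ j ≤ T (with the empty sum equal to 0 for j = 0). Then there exists a constant D̃ depending only on λ, β₁, β₂, D such that u_T ≤ (A₀ + Σ_{j=1}^{T} (A_j − (1 − η_j λ) A_{j−1})) · exp(D̃ S_T), where S_T = Σ_{j=1}^{T} η_j. If moreover (A_j) is non-decreasing, then u_T ≤ A_T (1 + λ S_T) exp(D̃ S_T). -/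
import Mathlib


/-- The cumulative weight-decay factor `α_{i,τ} = ∏_{j=i}^{τ} (1 − η_j λ)`
(an empty product when `i > τ`, so `α_{τ+1,τ} = 1`). -/
def adamAlpha (lam : ℝ) (η : ℕ → ℝ) (i τ : ℕ) : ℝ :=
  ∏ j ∈ Finset.Icc i τ, (1 - η j * lam)

/-- The AdamW perturbation coefficients
`κ^λ_{i,T} = Σ_{τ=i+1}^{T} ((1−β₁) η_τ α_{τ+1,T} / (1−β₁^τ)) (β₁^{τ−i−1} + 2β₂^{τ−i−1})`. -/
noncomputable def adamKappa (lam β₁ β₂ : ℝ) (η : ℕ → ℝ) (i T : ℕ) : ℝ :=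
  ∑ τ ∈ Finset.Icc (i + 1) T,
    ((1 - β₁) * η τ * adamAlpha lam η (τ + 1) T / (1 - β₁ ^ τ)) *
      (β₁ ^ (τ - i - 1) + 2 * β₂ ^ (τ - i - 1))

/-- Partial sum of step sizes. -/
def gronS (η : ℕ → ℝ) (j : ℕ) : ℝ := ∑ k ∈ Finset.Icc 1 j, η k

/-- Telescoped majorant sequence. -/
def gronB (lam : ℝ) (η A : ℕ → ℝ) (j : ℕ) : ℝ :=
  A 0 + ∑ k ∈ Finset.Icc 1 j, (A k - (1 - η k * lam) * A (k - 1))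

lemma gronS_zero (η : ℕ → ℝ) : gronS η 0 = 0 := by
  simp [gronS]

lemma gronS_succ (η : ℕ → ℝ) (n : ℕ) : gronS η (n + 1) = gronS η n + η (n + 1) := by
  unfold gronS
  exact Finset.sum_Icc_succ_top (by omega) η

lemma gronB_succ (lam : ℝ) (η A : ℕ → ℝ) (n : ℕ) :
    gronB lam η A (n + 1) = gronB lam η A n + (A (n + 1) - (1 - η (n + 1) * lam) * A n) := by
  unfold gronB
  rw [Finset.sum_Icc_succ_top (by omega)]
  simp only [Nat.add_sub_cancel]
  ring

lemma geom_bound {β₂ : ℝ} (hβ₂0 : 0 ≤ β₂) (hβ₂ : β₂ < 1) (τ : ℕ) :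
    ∑ i ∈ Finset.range τ, β₂ ^ (τ - i - 1) ≤ 1 / (1 - β₂) := by
  have hre : ∑ i ∈ Finset.range τ, β₂ ^ (τ - i - 1) = ∑ i ∈ Finset.range τ, β₂ ^ i := by
    rw [← Finset.sum_range_reflect (fun m => β₂ ^ m) τ]
    apply Finset.sum_congr rfl
    intro i hi
    congr 1
    omega
  rw [hre, le_div_iff₀ (by linarith)]
  nlinarith [geom_sum_mul β₂ τ, pow_nonneg hβ₂0 τ]

/-- Discrete Grönwall-type lemma for the AdamW recursion: if `u_j ≤ A_j + D Σ_i κ^λ_{i,j} u_i`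
with the stated hypotheses, then there is a constant `D̃` depending only on `λ, β₁, β₂, D`
such that `u_T ≤ (A₀ + Σ_{j=1}^T (A_j − (1 − η_j λ) A_{j−1})) exp(D̃ S_T)`, and if `(A_j)` is
non-decreasing then `u_T ≤ A_T (1 + λ S_T) exp(D̃ S_T)`, where `S_T = Σ_{j=1}^T η_j`. -/
theorem stmt_15 (D lam β₁ β₂ : ℝ) (hD : 0 ≤ D) (hlam : 0 < lam)
    (hβ₁ : 0 < β₁) (hβ₁₂ : β₁ ≤ β₂) (hβ₂ : β₂ < 1) :
    ∃ Dt : ℝ, ∀ (T : ℕ) (η A u : ℕ → ℝ),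
      (∀ j, 1 ≤ j → 0 < η j ∧ η j < 1 / lam) →
      (∀ j, 0 ≤ A j) →
      (∀ j, 1 ≤ j → j ≤ T → (1 - η j * lam) * A (j - 1) ≤ A j) →
      (∀ j, 0 ≤ u j) →
      (∀ j ≤ T, u j ≤ A j + D * ∑ i ∈ Finset.range j, adamKappa lam β₁ β₂ η i j * u i) →
      (u T ≤ (A 0 + ∑ j ∈ Finset.Icc 1 T, (A j - (1 - η j * lam) * A (j - 1))) *
          Real.exp (Dt * ∑ j ∈ Finset.Icc 1 T, η j)) ∧
      ((∀ j < T, A j ≤ A (j + 1)) →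
        u T ≤ A T * (1 + lam * ∑ j ∈ Finset.Icc 1 T, η j) *
          Real.exp (Dt * ∑ j ∈ Finset.Icc 1 T, η j)) := by
  have hβ₂0 : 0 < β₂ := lt_of_lt_of_le hβ₁ hβ₁₂
  have hβ₁1 : β₁ < 1 := lt_of_le_of_lt hβ₁₂ hβ₂
  have h1β₂ : 0 < 1 - β₂ := by linarith
  set Dt : ℝ := 3 * D / (1 - β₂) + 1 with hDtdef
  have hD3 : 0 ≤ 3 * D / (1 - β₂) := by positivity
  have hDt : 0 < Dt := by rw [hDtdef]; linarith
  have hDle : 3 * D / (1 - β₂) ≤ Dt := by rw [hDtdef]; linarith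
  refine ⟨Dt, ?_⟩
  intro T η A u hη hA0 hArec hu0 hrec
  have hηpos : ∀ j, 1 ≤ j → 0 < η j := fun j hj => (hη j hj).1
  have hηlam : ∀ j, 1 ≤ j → η j * lam < 1 := by
    intro j hj
    have := (hη j hj).2
    rwa [lt_div_iff₀ hlam] at this
  -- S facts
  have hSnn : ∀ j, 0 ≤ gronS η j := by
    intro j
    apply Finset.sum_nonneg
    intro k hk
    exact (hηpos k (Finset.mem_Icc.mp hk).1).le
  have hSmono : ∀ i j : ℕ, i ≤ j → gronS η i ≤ gronS η j := by
    intro i j hij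
    apply Finset.sum_le_sum_of_subset_of_nonneg (Finset.Icc_subset_Icc_right hij)
    intro k hk _
    exact (hηpos k (Finset.mem_Icc.mp hk).1).le
  -- B facts
  have hBalt : ∀ j, gronB lam η A j = A j + lam * ∑ k ∈ Finset.Icc 1 j, η k * A (k - 1) := by
    intro j
    induction j with
    | zero => simp [gronB]
    | succ n ihn =>
      rw [gronB_succ, ihn, Finset.sum_Icc_succ_top (by omega : 1 ≤ n + 1)]
      simp only [Nat.add_sub_cancel]
      ring
  have hAleB : ∀ j, A j ≤ gronB lam η A j := by
    intro j
    rw [hBalt j]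
    have : 0 ≤ ∑ k ∈ Finset.Icc 1 j, η k * A (k - 1) := by
      apply Finset.sum_nonneg
      intro k hk
      exact mul_nonneg (hηpos k (Finset.mem_Icc.mp hk).1).le (hA0 _)
    nlinarith
  have hBnn : ∀ j, 0 ≤ gronB lam η A j := fun j => le_trans (hA0 j) (hAleB j)
  have hBmono : ∀ i j : ℕ, i ≤ j → j ≤ T → gronB lam η A i ≤ gronB lam η A j := by
    intro i j hij hjT
    induction j with
    | zero =>
      obtain rfl : i = 0 := Nat.le_zero.mp hij
      exact le_rfl
    | succ n ihn =>
      by_cases h : i = n + 1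
      · subst h; exact le_rfl
      · have hi : i ≤ n := by omega
        refine le_trans (ihn hi (by omega)) ?_
        rw [gronB_succ]
        have := hArec (n + 1) (by omega) hjT
        simp only [Nat.add_sub_cancel] at this
        linarith
  -- alpha facts
  have hαfact : ∀ a b : ℕ, 1 ≤ a → 0 ≤ adamAlpha lam η a b ∧ adamAlpha lam η a b ≤ 1 := by
    intro a b ha
    have h0 : ∀ k ∈ Finset.Icc a b, 0 ≤ 1 - η k * lam := by
      intro k hk
      have hk1 : 1 ≤ k := le_trans ha (Finset.mem_Icc.mp hk).1
      linarith [hηlam k hk1]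
    have h1 : ∀ k ∈ Finset.Icc a b, 1 - η k * lam ≤ 1 := by
      intro k hk
      have hk1 : 1 ≤ k := le_trans ha (Finset.mem_Icc.mp hk).1
      nlinarith [mul_pos (hηpos k hk1) hlam]
    exact ⟨Finset.prod_nonneg h0, Finset.prod_le_one h0 h1⟩
  -- kappa bound
  have hκbound : ∀ i j : ℕ, adamKappa lam β₁ β₂ η i j ≤
      ∑ τ ∈ Finset.Icc (i + 1) j, 3 * (η τ * β₂ ^ (τ - i - 1)) := by
    intro i j
    unfold adamKappa
    apply Finset.sum_le_sum
    intro τ hτ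
    have hτ1 : 1 ≤ τ := by have := (Finset.mem_Icc.mp hτ).1; omega
    have hηp := hηpos τ hτ1
    have hβ₁τ : β₁ ^ τ < 1 := pow_lt_one₀ hβ₁.le hβ₁1 (by omega)
    have hβ₁τ' : β₁ ^ τ ≤ β₁ := by
      calc β₁ ^ τ ≤ β₁ ^ 1 := pow_le_pow_of_le_one hβ₁.le hβ₁1.le hτ1
        _ = β₁ := pow_one β₁
    obtain ⟨hα0, hα1⟩ := hαfact (τ + 1) j (by omega)
    have hpow : β₁ ^ (τ - i - 1) ≤ β₂ ^ (τ - i - 1) := pow_le_pow_left₀ hβ₁.le hβ₁₂ _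
    have hβ₂m : 0 ≤ β₂ ^ (τ - i - 1) := pow_nonneg hβ₂0.le _
    have hc : (1 - β₁) * η τ * adamAlpha lam η (τ + 1) j / (1 - β₁ ^ τ) ≤ η τ := by
      rw [div_le_iff₀ (by linarith)]
      calc (1 - β₁) * η τ * adamAlpha lam η (τ + 1) j
          ≤ (1 - β₁) * η τ * 1 := by
            apply mul_le_mul_of_nonneg_left hα1 (mul_nonneg (by linarith) hηp.le)
        _ = (1 - β₁) * η τ := mul_one _
        _ ≤ (1 - β₁ ^ τ) * η τ := mul_le_mul_of_nonneg_right (by linarith) hηp.le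
        _ = η τ * (1 - β₁ ^ τ) := mul_comm _ _
    have hc0 : 0 ≤ (1 - β₁) * η τ * adamAlpha lam η (τ + 1) j / (1 - β₁ ^ τ) :=
      div_nonneg (mul_nonneg (mul_nonneg (by linarith) hηp.le) hα0) (by linarith)
    have hf : β₁ ^ (τ - i - 1) + 2 * β₂ ^ (τ - i - 1) ≤ 3 * β₂ ^ (τ - i - 1) := by linarith
    have hf0 : 0 ≤ β₁ ^ (τ - i - 1) + 2 * β₂ ^ (τ - i - 1) := by positivity
    calc (1 - β₁) * η τ * adamAlpha lam η (τ + 1) j / (1 - β₁ ^ τ) *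
          (β₁ ^ (τ - i - 1) + 2 * β₂ ^ (τ - i - 1))
        ≤ η τ * (3 * β₂ ^ (τ - i - 1)) := mul_le_mul hc hf hf0 hηp.le
      _ = 3 * (η τ * β₂ ^ (τ - i - 1)) := by ring
  -- exponential sum bound
  have hexp : ∀ j : ℕ,
      Dt * ∑ τ ∈ Finset.Icc 1 j, η τ * Real.exp (Dt * gronS η (τ - 1)) ≤
        Real.exp (Dt * gronS η j) - 1 := by
    intro j
    induction j with
    | zero => simp [gronS_zero]
    | succ n ihn =>
      rw [Finset.sum_Icc_succ_top (by omega : 1 ≤ n + 1)]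
      simp only [Nat.add_sub_cancel]
      have e1 : Real.exp (Dt * gronS η n) * (Dt * η (n + 1) + 1) ≤
          Real.exp (Dt * gronS η (n + 1)) := by
        have hrw : Dt * gronS η (n + 1) = Dt * gronS η n + Dt * η (n + 1) := by
          rw [gronS_succ]; ring
        rw [hrw, Real.exp_add]
        exact mul_le_mul_of_nonneg_left (Real.add_one_le_exp _) (Real.exp_pos _).le
      nlinarith [ihn, e1]
  -- main induction
  have main : ∀ j, j ≤ T → u j ≤ gronB lam η A j * Real.exp (Dt * gronS η j) := by
    intro j
    induction j using Nat.strong_induction_on with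
    | _ j ih =>
      intro hjT
      have hE1 : 1 ≤ Real.exp (Dt * gronS η j) := by
        have hnn : 0 ≤ Dt * gronS η j := mul_nonneg hDt.le (hSnn j)
        linarith [Real.add_one_le_exp (Dt * gronS η j)]
      have h1 : ∀ i ∈ Finset.range j, adamKappa lam β₁ β₂ η i j * u i ≤
          ∑ τ ∈ Finset.Icc (i + 1) j,
            3 * (η τ * β₂ ^ (τ - i - 1)) * (gronB lam η A j * Real.exp (Dt * gronS η (τ - 1))) := by
        intro i hi
        have hi' : i < j := Finset.mem_range.mp hi
        calc adamKappa lam β₁ β₂ η i j * u i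
            ≤ (∑ τ ∈ Finset.Icc (i + 1) j, 3 * (η τ * β₂ ^ (τ - i - 1))) * u i :=
              mul_le_mul_of_nonneg_right (hκbound i j) (hu0 i)
          _ = ∑ τ ∈ Finset.Icc (i + 1) j, 3 * (η τ * β₂ ^ (τ - i - 1)) * u i := by
              rw [Finset.sum_mul]
          _ ≤ _ := by
              apply Finset.sum_le_sum
              intro τ hτ
              have hτi : i + 1 ≤ τ := (Finset.mem_Icc.mp hτ).1
              have hτ1 : 1 ≤ τ := by omega
              have hcoef : 0 ≤ 3 * (η τ * β₂ ^ (τ - i - 1)) := by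
                have := (hηpos τ hτ1).le
                positivity
              apply mul_le_mul_of_nonneg_left _ hcoef
              calc u i ≤ gronB lam η A i * Real.exp (Dt * gronS η i) :=
                    ih i hi' (by omega)
                _ ≤ gronB lam η A j * Real.exp (Dt * gronS η (τ - 1)) := by
                    apply mul_le_mul (hBmono i j hi'.le hjT)
                    · exact Real.exp_le_exp.mpr
                        (mul_le_mul_of_nonneg_left (hSmono i (τ - 1) (by omega)) hDt.le)
                    · exact (Real.exp_pos _).le
                    · exact hBnn j
      have hmem : ∀ (x y : ℕ), x ∈ Finset.range j ∧ y ∈ Finset.Icc (x + 1) j ↔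
          x ∈ Finset.range y ∧ y ∈ Finset.Icc 1 j := by
        intro x y
        simp only [Finset.mem_range, Finset.mem_Icc]
        omega
      have h3 : ∀ τ ∈ Finset.Icc 1 j,
          ∑ i ∈ Finset.range τ,
            3 * (η τ * β₂ ^ (τ - i - 1)) * (gronB lam η A j * Real.exp (Dt * gronS η (τ - 1)))
          ≤ 3 / (1 - β₂) * gronB lam η A j * (η τ * Real.exp (Dt * gronS η (τ - 1))) := by
        intro τ hτ
        have hτ1 : 1 ≤ τ := (Finset.mem_Icc.mp hτ).1
        have hcoef : 0 ≤ 3 * η τ * (gronB lam η A j * Real.exp (Dt * gronS η (τ - 1))) := by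
          have := (hηpos τ hτ1).le
          have := hBnn j
          positivity
        calc ∑ i ∈ Finset.range τ,
              3 * (η τ * β₂ ^ (τ - i - 1)) * (gronB lam η A j * Real.exp (Dt * gronS η (τ - 1)))
            = 3 * η τ * (gronB lam η A j * Real.exp (Dt * gronS η (τ - 1))) *
                ∑ i ∈ Finset.range τ, β₂ ^ (τ - i - 1) := by
              rw [Finset.mul_sum]
              apply Finset.sum_congr rfl
              intro i _
              ring
          _ ≤ 3 * η τ * (gronB lam η A j * Real.exp (Dt * gronS η (τ - 1))) * (1 / (1 - β₂)) :=
              mul_le_mul_of_nonneg_left (geom_bound hβ₂0.le hβ₂ τ) hcoef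
          _ = 3 / (1 - β₂) * gronB lam η A j * (η τ * Real.exp (Dt * gronS η (τ - 1))) := by
              ring
      calc u j ≤ A j + D * ∑ i ∈ Finset.range j, adamKappa lam β₁ β₂ η i j * u i :=
            hrec j hjT
        _ ≤ A j + D * ∑ i ∈ Finset.range j, ∑ τ ∈ Finset.Icc (i + 1) j,
              3 * (η τ * β₂ ^ (τ - i - 1)) * (gronB lam η A j * Real.exp (Dt * gronS η (τ - 1))) := by
            have := Finset.sum_le_sum h1
            nlinarith [mul_le_mul_of_nonneg_left (Finset.sum_le_sum h1) hD]
        _ = A j + D * ∑ τ ∈ Finset.Icc 1 j, ∑ i ∈ Finset.range τ,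
              3 * (η τ * β₂ ^ (τ - i - 1)) * (gronB lam η A j * Real.exp (Dt * gronS η (τ - 1))) := by
            rw [Finset.sum_comm' hmem]
        _ ≤ A j + D * (3 / (1 - β₂) * gronB lam η A j *
              ∑ τ ∈ Finset.Icc 1 j, η τ * Real.exp (Dt * gronS η (τ - 1))) := by
            have h4 : ∑ τ ∈ Finset.Icc 1 j, ∑ i ∈ Finset.range τ,
                3 * (η τ * β₂ ^ (τ - i - 1)) *
                  (gronB lam η A j * Real.exp (Dt * gronS η (τ - 1))) ≤
                3 / (1 - β₂) * gronB lam η A j *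
                  ∑ τ ∈ Finset.Icc 1 j, η τ * Real.exp (Dt * gronS η (τ - 1)) := by
              rw [Finset.mul_sum]
              exact Finset.sum_le_sum h3
            nlinarith [mul_le_mul_of_nonneg_left h4 hD]
        _ ≤ A j + gronB lam η A j * (Real.exp (Dt * gronS η j) - 1) := by
            have hsum : ∑ τ ∈ Finset.Icc 1 j, η τ * Real.exp (Dt * gronS η (τ - 1)) ≤
                (Real.exp (Dt * gronS η j) - 1) / Dt := by
              rw [le_div_iff₀ hDt]
              linarith [hexp j]
            have hsnn : 0 ≤ ∑ τ ∈ Finset.Icc 1 j, η τ * Real.exp (Dt * gronS η (τ - 1)) := by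
              apply Finset.sum_nonneg
              intro τ hτ
              exact mul_nonneg (hηpos τ (Finset.mem_Icc.mp hτ).1).le (Real.exp_pos _).le
            have step1 : D * (3 / (1 - β₂) * gronB lam η A j *
                ∑ τ ∈ Finset.Icc 1 j, η τ * Real.exp (Dt * gronS η (τ - 1))) ≤
                D * (3 / (1 - β₂)) * gronB lam η A j * ((Real.exp (Dt * gronS η j) - 1) / Dt) := by
              have hc : 0 ≤ D * (3 / (1 - β₂)) * gronB lam η A j := by
                have := hBnn j
                positivity
              calc D * (3 / (1 - β₂) * gronB lam η A j *
                    ∑ τ ∈ Finset.Icc 1 j, η τ * Real.exp (Dt * gronS η (τ - 1)))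
                  = D * (3 / (1 - β₂)) * gronB lam η A j *
                    ∑ τ ∈ Finset.Icc 1 j, η τ * Real.exp (Dt * gronS η (τ - 1)) := by ring
                _ ≤ _ := mul_le_mul_of_nonneg_left hsum hc
            have step2 : D * (3 / (1 - β₂)) * gronB lam η A j *
                ((Real.exp (Dt * gronS η j) - 1) / Dt) ≤
                gronB lam η A j * (Real.exp (Dt * gronS η j) - 1) := by
              have hX : 0 ≤ gronB lam η A j * (Real.exp (Dt * gronS η j) - 1) :=
                mul_nonneg (hBnn j) (by linarith)
              have heq : D * (3 / (1 - β₂)) * gronB lam η A j *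
                  ((Real.exp (Dt * gronS η j) - 1) / Dt) =
                  (3 * D / (1 - β₂) / Dt) * (gronB lam η A j * (Real.exp (Dt * gronS η j) - 1)) := by
                ring
              rw [heq]
              have hr : 3 * D / (1 - β₂) / Dt ≤ 1 := by
                rw [div_le_one hDt]
                exact hDle
              nlinarith
            linarith
        _ ≤ gronB lam η A j * Real.exp (Dt * gronS η j) := by
            nlinarith [hAleB j]
  constructor
  · exact main T le_rfl
  · intro hm
    have hAmono : ∀ a b : ℕ, a ≤ b → b ≤ T → A a ≤ A b := by
      intro a b hab hbT
      induction b with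
      | zero =>
        obtain rfl : a = 0 := Nat.le_zero.mp hab
        exact le_rfl
      | succ n ihn =>
        by_cases h : a = n + 1
        · subst h; exact le_rfl
        · exact le_trans (ihn (by omega) (by omega)) (hm n (by omega))
    have hBT : gronB lam η A T ≤ A T * (1 + lam * gronS η T) := by
      rw [hBalt T]
      have hsum : ∑ k ∈ Finset.Icc 1 T, η k * A (k - 1) ≤
          ∑ k ∈ Finset.Icc 1 T, η k * A T := by
        apply Finset.sum_le_sum
        intro k hk
        have hk1 : 1 ≤ k := (Finset.mem_Icc.mp hk).1
        have hkT : k ≤ T := (Finset.mem_Icc.mp hk).2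
        exact mul_le_mul_of_nonneg_left (hAmono (k - 1) T (by omega) le_rfl) (hηpos k hk1).le
      have heq : ∑ k ∈ Finset.Icc 1 T, η k * A T = gronS η T * A T := by
        rw [gronS, Finset.sum_mul]
      nlinarith
    calc u T ≤ gronB lam η A T * Real.exp (Dt * gronS η T) := main T le_rfl
      _ ≤ A T * (1 + lam * gronS η T) * Real.exp (Dt * gronS η T) :=
          mul_le_mul_of_nonneg_right hBT (Real.exp_pos _).le
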